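/- Phase-angle noise injection achieves ε-differential privacy of flow (Theorem 5): let θ1, θ2 be real phase angles, Γ ≠ 0, ε > 0, ω > 0. Let α1, α2 be independent exponential random variables with mean ω/(|Γ|ε). Then the perturbed flow M'(θ1, θ2) = Γ·((θ1 + α1) − (θ2 + α2)) equals the true flow f = Γ(θ1 − θ2) plus noise ψ = Γ(α1 − α2), and ψ has the Laplace distribution Lap(0, ω/ε). Consequently, for any other pair (θ1', θ2') with |Γ(θ1 − θ2) − Γ(θ1' − θ2')| ≤ ω, the laws satisfy P(M'(θ1,θ2) ∈ S) ≤ e^ε P(M'(θ1',θ2') ∈ S) for all measurable S ⊆ ℝ. -/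

import Mathlib

/-!
The density of `α1 - α2` is the convolution `∫ r e^{-r x} · r e^{-r (x - z)} dx` over
`x ≥ max 0 z`, which equals `(r/2) e^{-r|z|}`: the difference of two independent `Exp(r)`
variables is `Lap(0, 1/r)`, and multiplying by `Γ` gives `Lap(0, |Γ|/r) = Lap(0, ω/ε)`.
The perturbed flow is the true flow shifted by this noise, and by the triangle inequality the
Laplace density satisfies `p(z - t) ≤ e^{|t - t'|/b} p(z - t')`, which is the privacy bound.
-/

open MeasureTheory ProbabilityTheory

noncomputable def laplaceMeasure (b : ℝ) : Measure ℝ :=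
  volume.withDensity (fun z => ENNReal.ofReal ((2 * b)⁻¹ * Real.exp (-|z| / b)))

open scoped ENNReal

theorem MeasurableEquiv.map_withDensity {α β : Type*} [MeasurableSpace α] [MeasurableSpace β]
    (e : α ≃ᵐ β) {μ : Measure α} {ν : Measure β} (hμν : μ.map e = ν) (f : α → ℝ≥0∞) :
    (μ.withDensity f).map e = ν.withDensity (f ∘ e.symm) := by
  subst hμν
  ext s hs
  rw [e.map_apply, withDensity_apply _ hs, withDensity_apply _ (e.measurable hs), e.restrict_map,
    lintegral_map_equiv]
  simp

section WithDensity

variable {G : Type*} [MeasurableSpace G] {μ : Measure G}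

theorem withDensity_map_neg [AddGroup G] [MeasurableNeg G] [μ.IsNegInvariant] (f : G → ℝ≥0∞) :
    (μ.withDensity f).map (fun x => -x) = μ.withDensity (fun x => f (-x)) :=
  (MeasurableEquiv.neg G).map_withDensity (Measure.map_neg_eq_self μ) f

theorem withDensity_map_const_add [AddCommGroup G] [MeasurableAdd G] [μ.IsAddLeftInvariant]
    (t : G) (f : G → ℝ≥0∞) :
    (μ.withDensity f).map (t + ·) = μ.withDensity (fun x => f (x - t)) := by
  rw [← MeasurableEquiv.coe_addLeft, (MeasurableEquiv.addLeft t).map_withDensity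
    (map_add_left_eq_self μ t) f]
  simp [Function.comp_def, neg_add_eq_sub]

end WithDensity

theorem volume_withDensity_map_const_mul {c : ℝ} (hc : c ≠ 0) (f : ℝ → ℝ≥0∞) :
    (volume.withDensity f).map (c * ·) =
      volume.withDensity (fun x => ENNReal.ofReal |c⁻¹| * f (c⁻¹ * x)) := by
  rw [← MeasurableEquiv.coe_mulLeft₀ hc, (MeasurableEquiv.mulLeft₀ c hc).map_withDensity
    (Real.map_volume_mul_left hc) f, withDensity_smul_measure,
    ← withDensity_smul' _ _ ENNReal.ofReal_ne_top]
  rfl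

noncomputable def laplacePDF (b z : ℝ) : ℝ≥0∞ :=
  ENNReal.ofReal ((2 * b)⁻¹ * Real.exp (-|z| / b))

theorem laplaceMeasure_eq_withDensity (b : ℝ) :
    laplaceMeasure b = volume.withDensity (laplacePDF b) := rfl

@[fun_prop]
theorem measurable_laplacePDF (b : ℝ) : Measurable (laplacePDF b) := by
  unfold laplacePDF; fun_prop

theorem laplacePDF_inv (r z : ℝ) :
    laplacePDF r⁻¹ z = ENNReal.ofReal (r / 2 * Real.exp (-(r * |z|))) := by
  rw [laplacePDF, mul_inv, inv_inv, div_inv_eq_mul, neg_mul, mul_comm |z|, ← div_eq_inv_mul]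

theorem laplaceMeasure_map_const_mul {c : ℝ} (hc : c ≠ 0) (b : ℝ) :
    (laplaceMeasure b).map (c * ·) = laplaceMeasure (|c| * b) := by
  rw [laplaceMeasure_eq_withDensity, laplaceMeasure_eq_withDensity,
    volume_withDensity_map_const_mul hc]
  congr 1 with x
  rw [laplacePDF, laplacePDF, ← ENNReal.ofReal_mul (abs_nonneg _), abs_mul, abs_inv]
  congr 1
  have : |c| ≠ 0 := abs_ne_zero.mpr hc
  field_simp

theorem laplacePDF_sub_le {b : ℝ} (hb : 0 < b) (t t' z : ℝ) :
    laplacePDF b (z - t) ≤ ENNReal.ofReal (Real.exp (|t - t'| / b)) * laplacePDF b (z - t') := by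
  rw [laplacePDF, laplacePDF, ← ENNReal.ofReal_mul (Real.exp_pos _).le]
  refine ENNReal.ofReal_le_ofReal ?_
  rw [mul_left_comm, ← Real.exp_add]
  gcongr
  rw [← add_div]
  refine div_le_div_of_nonneg_right ?_ hb.le
  linarith [abs_sub_le z t t']

theorem laplaceMeasure_map_const_add_le {b : ℝ} (hb : 0 < b) (t t' : ℝ) :
    (laplaceMeasure b).map (t + ·) ≤
      ENNReal.ofReal (Real.exp (|t - t'| / b)) • (laplaceMeasure b).map (t' + ·) := by
  rw [laplaceMeasure_eq_withDensity, withDensity_map_const_add, withDensity_map_const_add,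
    ← withDensity_smul _ (by fun_prop)]
  exact withDensity_mono (.of_forall fun z => laplacePDF_sub_le hb t t' z)

@[fun_prop]
theorem measurable_exponentialPDF (r : ℝ) : Measurable (exponentialPDF r) :=
  (measurable_exponentialPDFReal r).ennreal_ofReal

-- The product vanishes unless `max 0 z ≤ x`; there the exponents combine via
-- `2 * max 0 z = z + |z|`.
theorem exponentialPDF_mul_exponentialPDF_sub {r : ℝ} (hr : 0 < r) (x z : ℝ) :
    exponentialPDF r x * exponentialPDF r (x - z) =
      laplacePDF r⁻¹ z * exponentialPDF (2 * r) (x - max 0 z) := by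
  rcases lt_or_ge x (max 0 z) with hx | hx
  · rw [exponentialPDF_of_neg (sub_neg.mpr hx), mul_zero]
    rcases lt_max_iff.mp hx with hx0 | hxz
    · rw [exponentialPDF_of_neg hx0, zero_mul]
    · rw [exponentialPDF_of_neg (sub_neg.mpr hxz), mul_zero]
  · have hmax : 2 * max 0 z = z + |z| := by
      rcases le_total z 0 with hz | hz
      · rw [max_eq_left hz, abs_of_nonpos hz]; ring
      · rw [max_eq_right hz, abs_of_nonneg hz]; ring
    rw [exponentialPDF_of_nonneg ((le_max_left 0 z).trans hx),
      exponentialPDF_of_nonneg (sub_nonneg.mpr ((le_max_right 0 z).trans hx)),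
      exponentialPDF_of_nonneg (sub_nonneg.mpr hx), laplacePDF_inv,
      ← ENNReal.ofReal_mul (by positivity), ← ENNReal.ofReal_mul (by positivity)]
    congr 1
    calc r * Real.exp (-(r * x)) * (r * Real.exp (-(r * (x - z))))
        = r / 2 * (2 * r) * Real.exp (-(r * x) + -(r * (x - z))) := by rw [Real.exp_add]; ring
      _ = r / 2 * (2 * r) * Real.exp (-(r * |z|) + -(2 * r * (x - max 0 z))) := by
          congr 2; linear_combination -r * hmax
      _ = _ := by rw [Real.exp_add]; ring

theorem lintegral_exponentialPDF_mul_exponentialPDF_sub {r : ℝ} (hr : 0 < r) (z : ℝ) :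
    ∫⁻ x, exponentialPDF r x * exponentialPDF r (x - z) = laplacePDF r⁻¹ z := by
  simp_rw [exponentialPDF_mul_exponentialPDF_sub hr]
  rw [lintegral_const_mul _ (by fun_prop), lintegral_sub_right_eq_self (exponentialPDF (2 * r)),
    lintegral_exponentialPDF_eq_one (by positivity), mul_one]

theorem expMeasure_eq_withDensity (r : ℝ) :
    expMeasure r = volume.withDensity (exponentialPDF r) := rfl

theorem expMeasure_conv_map_neg {r : ℝ} (hr : 0 < r) :
    expMeasure r ∗ (expMeasure r).map (fun x => -x) = laplaceMeasure r⁻¹ := by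
  rw [expMeasure_eq_withDensity, laplaceMeasure_eq_withDensity, withDensity_map_neg,
    conv_withDensity_eq_lconvolution (by fun_prop) (by fun_prop)]
  congr 1 with z
  simp only [lconvolution_def, neg_add_eq_sub, neg_sub]
  exact lintegral_exponentialPDF_mul_exponentialPDF_sub hr z

theorem ProbabilityTheory.IndepFun.map_sub_eq_laplaceMeasure {Ω : Type*} [MeasurableSpace Ω]
    {P : Measure Ω} [IsFiniteMeasure P] {X Y : Ω → ℝ} (hX : Measurable X) (hY : Measurable Y)
    (hXY : IndepFun X Y P) {r : ℝ} (hr : 0 < r) (hlawX : P.map X = expMeasure r)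
    (hlawY : P.map Y = expMeasure r) :
    P.map (X - Y) = laplaceMeasure r⁻¹ := by
  rw [sub_eq_add_neg, (hXY.comp measurable_id measurable_neg).map_add_eq_map_conv_map hX hY.neg]
  rw [show -Y = (fun x => -x) ∘ Y from rfl, ← Measure.map_map measurable_neg hY, hlawX, hlawY]
  exact expMeasure_conv_map_neg hr

/-- Phase-angle noise injection achieves `ε`-differential privacy of flow:
if `α1, α2` are independent exponential random variables with mean `ω/(|Γ|ε)`,
then the noise `ψ = Γ(α1 - α2)` in the perturbed flow
`M'(θ1,θ2) = Γ((θ1+α1) - (θ2+α2)) = Γ(θ1-θ2) + ψ` is `Lap(0, ω/ε)` distributed,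
and whenever the true flows `Γ(θ1-θ2)` and `Γ(θ1'-θ2')` differ by at most `ω`,
`P(M'(θ1,θ2) ∈ S) ≤ e^ε · P(M'(θ1',θ2') ∈ S)` for all measurable `S`. -/
theorem phase_angle_noise_dp {Ω : Type*} [MeasurableSpace Ω] (P : Measure Ω)
    [IsProbabilityMeasure P] (Γ ε ω : ℝ) (hΓ : Γ ≠ 0) (hε : 0 < ε) (hω : 0 < ω)
    (α1 α2 : Ω → ℝ) (hα1 : Measurable α1) (hα2 : Measurable α2)
    (hindep : IndepFun α1 α2 P)
    (hlaw1 : P.map α1 = expMeasure (ω / (|Γ| * ε))⁻¹)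
    (hlaw2 : P.map α2 = expMeasure (ω / (|Γ| * ε))⁻¹) :
    (P.map (fun a => Γ * (α1 a - α2 a)) = laplaceMeasure (ω / ε)) ∧
    (∀ θ1 θ2 θ1' θ2' : ℝ, |Γ * (θ1 - θ2) - Γ * (θ1' - θ2')| ≤ ω →
      ∀ S : Set ℝ, MeasurableSet S →
        P.map (fun a => Γ * ((θ1 + α1 a) - (θ2 + α2 a))) S ≤
          ENNReal.ofReal (Real.exp ε) *
            P.map (fun a => Γ * ((θ1' + α1 a) - (θ2' + α2 a))) S) := by
  have hψ : Measurable fun a => Γ * (α1 a - α2 a) := by fun_prop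
  have hnoise : P.map (fun a => Γ * (α1 a - α2 a)) = laplaceMeasure (ω / ε) := by
    have hdiff := hindep.map_sub_eq_laplaceMeasure hα1 hα2
      (inv_pos.mpr (by positivity)) hlaw1 hlaw2
    rw [show (fun a => Γ * (α1 a - α2 a)) = (Γ * ·) ∘ (α1 - α2) from rfl,
      ← Measure.map_map (measurable_const_mul Γ) (hα1.sub hα2), hdiff,
      laplaceMeasure_map_const_mul hΓ, inv_inv]
    congr 1
    field_simp [abs_ne_zero.mpr hΓ]
  refine ⟨hnoise, fun θ1 θ2 θ1' θ2' hflow S _ => ?_⟩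
  have hshift : ∀ t1 t2 : ℝ, P.map (fun a => Γ * ((t1 + α1 a) - (t2 + α2 a))) =
      (laplaceMeasure (ω / ε)).map (Γ * (t1 - t2) + ·) := fun t1 t2 => by
    rw [← hnoise, Measure.map_map (measurable_const_add _) hψ]
    congr 1 with a
    simp only [Function.comp_apply]; ring
  have hexp : Real.exp (|Γ * (θ1 - θ2) - Γ * (θ1' - θ2')| / (ω / ε)) ≤ Real.exp ε := by
    gcongr
    rwa [div_le_iff₀ (by positivity), mul_div_cancel₀ _ hε.ne']
  rw [hshift, hshift]
  calc _ ≤ ENNReal.ofReal (Real.exp (|Γ * (θ1 - θ2) - Γ * (θ1' - θ2')| / (ω / ε))) * _ :=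
        laplaceMeasure_map_const_add_le (by positivity) _ _ S
    _ ≤ _ := mul_le_mul_of_nonneg_right (ENNReal.ofReal_le_ofReal hexp) zero_le
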